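/- For every positive integer k and every complex number q with |q| < 1: sum over n ≥ 1 of sptk_d(n) q^n = P_k(q)·(-q;q)_∞ + (-1)^k (q;q)_{k-1}, where P_1(q) = 1 and P_k(q) = (q^{k-1} − 1) P_{k-1}(q) + q^{k-1} for k > 1. -/

import Mathlib

open scoped BigOperators

/-- The finite q-Pochhammer symbol `(a; q)_N = ∏_{j=0}^{N-1} (1 - a q^j)`. -/
noncomputable def qPoch (a q : ℂ) (N : ℕ) : ℂ := ∏ j ∈ Finset.range N, (1 - a * q ^ j)

/-- The infinite q-Pochhammer symbol `(a; q)_∞ = ∏_{j=0}^{∞} (1 - a q^j)`. -/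
noncomputable def qPochInf (a q : ℂ) : ℂ := ∏' j : ℕ, (1 - a * q ^ j)

/-- An overpartition of `n`: a multiset of positive non-overlined parts together with a
finset of positive overlined parts (the overlined parts are distinct), with total sum `n`. -/
structure Overpartition (n : ℕ) where
  parts : Multiset ℕ
  overlined : Finset ℕ
  parts_pos : ∀ x ∈ parts, 0 < x
  overlined_pos : ∀ x ∈ overlined, 0 < x
  sum_eq : parts.sum + ∑ x ∈ overlined, x = n

/-- `s` is the smallest non-overlined part of `π`, it appears exactly `k` times among the
non-overlined parts, and every overlined part is greater than `s`. -/
def SptbarCond (k : ℕ) {n : ℕ} (π : Overpartition n) (s : ℕ) : Prop :=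
  s ∈ π.parts ∧ (∀ x ∈ π.parts, s ≤ x) ∧ π.parts.count s = k ∧ ∀ x ∈ π.overlined, s < x

/-- `SptbarCond` together with: every part other than `s` is incongruent to `s` modulo 2. -/
def SptbarOCond (k : ℕ) {n : ℕ} (π : Overpartition n) (s : ℕ) : Prop :=
  SptbarCond k π s ∧ (∀ x ∈ π.parts, x ≠ s → x % 2 ≠ s % 2) ∧
    ∀ x ∈ π.overlined, x % 2 ≠ s % 2

/-- The number of parts of `π` that are greater than `s`. -/
def numGreater {n : ℕ} (π : Overpartition n) (s : ℕ) : ℕ :=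
  (π.parts.filter (fun x => s < x)).card + π.overlined.card

/-- The total number of parts of the overpartition `π`. -/
def numParts {n : ℕ} (π : Overpartition n) : ℕ :=
  π.parts.card + π.overlined.card

/-- `sptbar k n`: the number of overpartitions of `n` whose smallest non-overlined part `s`
appears exactly `k` times and all of whose overlined parts are greater than `s`. -/
noncomputable def sptbar (k n : ℕ) : ℕ :=
  Nat.card {π : Overpartition n // ∃ s, SptbarCond k π s}

/-- `sptbar' k n = a_e(k,n) - a_o(k,n)`. -/
noncomputable def sptbar' (k n : ℕ) : ℤ :=
  (Nat.card {π : Overpartition n // ∃ s, SptbarCond k π s ∧ Even (numGreater π s)} : ℤ) -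
    (Nat.card {π : Overpartition n // ∃ s, SptbarCond k π s ∧ Odd (numGreater π s)} : ℤ)

/-- `sptbarO k n`: as `sptbar k n`, with all parts other than the smallest non-overlined part
incongruent to it modulo 2. -/
noncomputable def sptbarO (k n : ℕ) : ℕ :=
  Nat.card {π : Overpartition n // ∃ s, SptbarOCond k π s}

/-- `sptbarO' k n = b_e(k,n) - b_o(k,n)`. -/
noncomputable def sptbarO' (k n : ℕ) : ℤ :=
  (Nat.card {π : Overpartition n // ∃ s, SptbarOCond k π s ∧ Even (numGreater π s)} : ℤ) -
    (Nat.card {π : Overpartition n // ∃ s, SptbarOCond k π s ∧ Odd (numGreater π s)} : ℤ)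

/-- The number of overpartitions of `n` into even parts. -/
noncomputable def pbarE (n : ℕ) : ℕ :=
  Nat.card {π : Overpartition n // (∀ x ∈ π.parts, Even x) ∧ ∀ x ∈ π.overlined, Even x}

/-- The number of overpartitions of `n` into odd parts with no non-overlined part equal to 1. -/
noncomputable def pbarOex (n : ℕ) : ℕ :=
  Nat.card {π : Overpartition n //
    (∀ x ∈ π.parts, Odd x) ∧ (∀ x ∈ π.overlined, Odd x) ∧ (1 : ℕ) ∉ π.parts}

/-- Among overpartitions of `n` into odd parts with no non-overlined 1's: the number of those
with an even number of parts minus the number of those with an odd number of parts. -/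
noncomputable def pbarOex' (n : ℕ) : ℤ :=
  (Nat.card {π : Overpartition n // ((∀ x ∈ π.parts, Odd x) ∧ (∀ x ∈ π.overlined, Odd x) ∧
      (1 : ℕ) ∉ π.parts) ∧ Even (numParts π)} : ℤ) -
    (Nat.card {π : Overpartition n // ((∀ x ∈ π.parts, Odd x) ∧ (∀ x ∈ π.overlined, Odd x) ∧
      (1 : ℕ) ∉ π.parts) ∧ Odd (numParts π)} : ℤ)

/-- `sptkd k n`: the number of partitions of `n` whose smallest part appears exactly `k`
times and all of whose remaining parts are distinct. -/
noncomputable def sptkd (k n : ℕ) : ℕ :=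
  Nat.card {m : Multiset ℕ // (∀ x ∈ m, 0 < x) ∧ m.sum = n ∧
    ∃ s, s ∈ m ∧ (∀ x ∈ m, s ≤ x) ∧ m.count s = k ∧ ∀ x ∈ m, x ≠ s → m.count x = 1}

/-- `P q 1 = 1` and `P q k = (q^(k-1) - 1) * P q (k-1) + q^(k-1)` for `k > 1`. -/
noncomputable def Pkd (q : ℂ) : ℕ → ℂ
  | 0 => 0
  | 1 => 1
  | (k + 2) => (q ^ (k + 1) - 1) * Pkd q (k + 1) + q ^ (k + 1)


/-!
Write a partition counted by `sptk_d(n)` as `k` copies of its smallest part `s` together with a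
set of distinct parts greater than `s`. Summing over `s` gives
`F_k = ∑_{s ≥ 1} q^{ks} A_s` with `A_s = ∏_{j > s} (1 + q^j)`. Since
`A_s = (1 + q^{s+1}) A_{s+1}` and `A_s → 1`, the series `F_1` telescopes to `A_0 - 1`, and
`F_{k+1} + F_k = ∑_{s ≥ 1} q^{ks} A_{s-1} = q^k (A_0 + F_k)`, which is exactly the recurrence
satisfied by `P_k A_0 + (-1)^k (q; q)_{k-1}`; finally `A_0 = (-q; q)_∞`.
-/

open Filter Topology

lemma hasSum_card_fiber_mul_pow {R X : Type*} [NormedRing R] [CompleteSpace R] (w : X → ℕ)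
    {x a : R} (h : HasSum (fun p => x ^ w p) a) :
    HasSum (fun n => (Nat.card {p // w p = n} : R) * x ^ n) a := by
  refine (h.tsum_fiberwise w).congr_fun fun n => ?_
  rw [tsum_congr fun p : w ⁻¹' {n} => congrArg (x ^ ·) p.2, tsum_const, nsmul_eq_mul]
  rfl

/- `tailProd q s = ∏_{j > s} (1 + q ^ j)` generates the partitions into distinct parts greater
than `s`; writing the factor as `1 + tailTerm q s j` over all `j` lets `tprod_one_add` expand
it as a sum over finsets. -/
noncomputable def tailTerm (q : ℂ) (s j : ℕ) : ℂ := if s < j then q ^ j else 0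

noncomputable def tailProd (q : ℂ) (s : ℕ) : ℂ := ∏' j, (1 + tailTerm q s j)

section Analytic

variable {q : ℂ}

lemma norm_tailTerm_le (q : ℂ) (s j : ℕ) : ‖tailTerm q s j‖ ≤ ‖q‖ ^ j := by
  unfold tailTerm
  split_ifs <;> simp

lemma summable_norm_tailTerm (hq : ‖q‖ < 1) (s : ℕ) : Summable fun j => ‖tailTerm q s j‖ :=
  (summable_geometric_of_lt_one (norm_nonneg q) hq).of_nonneg_of_le (fun _ => norm_nonneg _)
    (norm_tailTerm_le q s)

lemma prod_tailTerm (q : ℂ) (s : ℕ) (S : Finset ℕ) :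
    ∏ i ∈ S, tailTerm q s i = if ∀ i ∈ S, s < i then q ^ ∑ i ∈ S, i else 0 := by
  unfold tailTerm
  rw [Finset.prod_ite_zero, Finset.prod_pow_eq_pow_sum]

lemma hasSum_prod_tailTerm (hq : ‖q‖ < 1) (s : ℕ) :
    HasSum (fun S : Finset ℕ => ∏ i ∈ S, tailTerm q s i) (tailProd q s) := by
  have h := summable_finsetProd_of_summable_norm (summable_norm_tailTerm hq s)
  rw [tailProd, tprod_one_add h]
  exact h.hasSum

lemma tailProd_eq_mul_tailProd_succ (hq : ‖q‖ < 1) (s : ℕ) :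
    tailProd q s = (1 + q ^ (s + 1)) * tailProd q (s + 1) := by
  have hdrop : ∀ j, (if j = s + 1 then 1 else 1 + tailTerm q s j) = 1 + tailTerm q (s + 1) j := by
    intro j
    unfold tailTerm
    split_ifs <;> first | rfl | omega | simp
  have hupdate : Function.update (fun j => 1 + tailTerm q s j) (s + 1) 1 =
      fun j => 1 + tailTerm q (s + 1) j := by
    ext j
    rw [Function.update_apply, hdrop]
  have hmul : Multipliable (Function.update (fun j => 1 + tailTerm q s j) (s + 1) 1) := by
    rw [hupdate]
    exact multipliable_one_add_of_summable (summable_norm_tailTerm hq (s + 1))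
  rw [tailProd, Multipliable.tprod_eq_mul_tprod_ite' _ hmul, tprod_congr hdrop, tailProd]
  simp only [tailTerm, lt_add_one, if_true]

lemma tendsto_tailProd (hq : ‖q‖ < 1) : Tendsto (tailProd q) atTop (𝓝 1) := by
  have h : Tendsto (tailProd q) atTop (𝓝 (∏' _ : ℕ, (1 + 0 : ℂ))) :=
    tendsto_tprod_one_add_of_dominated_convergence
      (summable_geometric_of_lt_one (norm_nonneg q) hq)
      (fun j => tendsto_const_nhds.congr' ((eventually_ge_atTop j).mono fun s hs => by
        simp [tailTerm, hs.not_gt]))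
      (Eventually.of_forall (norm_tailTerm_le q))
  simpa using h

lemma tailProd_zero (hq : ‖q‖ < 1) : tailProd q 0 = qPochInf (-q) q := by
  have hsum : Summable fun j => ‖tailTerm q 0 (j + 1)‖ :=
    (summable_nat_add_iff 1).mpr (summable_norm_tailTerm hq 0)
  have hmul : Multipliable fun j => 1 + tailTerm q 0 (j + 1) :=
    multipliable_one_add_of_summable hsum
  rw [tailProd, tprod_eq_zero_mul' (f := fun j => 1 + tailTerm q 0 j) hmul, qPochInf]
  simp only [tailTerm, lt_irrefl, if_false, add_zero, one_mul, Nat.zero_lt_succ, if_true]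
  congr 1
  ext j
  ring

lemma exists_norm_tailProd_le (hq : ‖q‖ < 1) : ∃ C, ∀ s, ‖tailProd q s‖ ≤ C := by
  obtain ⟨C, hC⟩ := (tendsto_tailProd hq).norm.isBoundedUnder_le.bddAbove_range
  exact ⟨C, fun s => hC (Set.mem_range_self s)⟩

end Analytic

noncomputable def sptkdGenFun (q : ℂ) (k : ℕ) : ℂ :=
  ∑' s : ℕ, q ^ (k * (s + 1)) * tailProd q (s + 1)

section Recurrence

variable {q : ℂ}

lemma summable_pow_mul_of_norm_le (hq : ‖q‖ < 1) {k : ℕ} (hk : 1 ≤ k) {a : ℕ → ℂ} {C : ℝ}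
    (ha : ∀ s, ‖a s‖ ≤ C) : Summable fun s => q ^ (k * (s + 1)) * a s := by
  refine Summable.of_norm_bounded
    ((summable_geometric_of_lt_one (norm_nonneg q) hq).mul_left C) fun s => ?_
  rw [norm_mul, norm_pow, mul_comm]
  have hpow : ‖q‖ ^ (k * (s + 1)) ≤ ‖q‖ ^ s :=
    pow_le_pow_of_le_one (norm_nonneg q) hq.le (by nlinarith)
  exact mul_le_mul (ha s) hpow (by positivity) ((norm_nonneg _).trans (ha s))

lemma summable_pow_mul_tailProd (hq : ‖q‖ < 1) {k : ℕ} (hk : 1 ≤ k) (t : ℕ) :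
    Summable fun s => q ^ (k * (s + 1)) * tailProd q (s + t) := by
  obtain ⟨C, hC⟩ := exists_norm_tailProd_le hq
  exact summable_pow_mul_of_norm_le hq hk fun s => hC (s + t)

lemma sptkdGenFun_one (hq : ‖q‖ < 1) : sptkdGenFun q 1 = tailProd q 0 - 1 := by
  have hterm : ∀ s,
      q ^ (1 * (s + 1)) * tailProd q (s + 1) = tailProd q s - tailProd q (s + 1) := by
    intro s
    rw [tailProd_eq_mul_tailProd_succ hq s]
    ring
  have hsum := (summable_pow_mul_tailProd hq le_rfl 1).hasSum_iff_tendsto_nat.mpr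
    ((tendsto_const_nhds.sub (tendsto_tailProd hq)).congr fun N => by
      rw [Finset.sum_congr rfl fun s _ => hterm s, Finset.sum_range_sub'])
  exact hsum.tsum_eq

lemma sptkdGenFun_succ (hq : ‖q‖ < 1) {k : ℕ} (hk : 1 ≤ k) :
    sptkdGenFun q (k + 1) = (q ^ k - 1) * sptkdGenFun q k + q ^ k * tailProd q 0 := by
  have hterm : ∀ s, q ^ ((k + 1) * (s + 1)) * tailProd q (s + 1) +
      q ^ (k * (s + 1)) * tailProd q (s + 1) = q ^ (k * (s + 1)) * tailProd q s := by
    intro s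
    rw [tailProd_eq_mul_tailProd_succ hq s]
    ring
  have hshift : ∑' s, q ^ (k * (s + 1)) * tailProd q s =
      q ^ k * tailProd q 0 + q ^ k * sptkdGenFun q k := by
    have hsum : Summable fun s => q ^ (k * (s + 1)) * tailProd q s :=
      summable_pow_mul_tailProd hq hk 0
    rw [hsum.tsum_eq_zero_add, sptkdGenFun, ← tsum_mul_left]
    congr 1
    · simp
    · exact tsum_congr fun s => by ring
  have hadd : sptkdGenFun q (k + 1) + sptkdGenFun q k =
      ∑' s, q ^ (k * (s + 1)) * tailProd q s := by
    rw [sptkdGenFun, sptkdGenFun, ← (summable_pow_mul_tailProd hq (by omega) 1).tsum_add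
      (summable_pow_mul_tailProd hq hk 1)]
    exact tsum_congr hterm
  linear_combination hadd.trans hshift

lemma sptkdGenFun_eq (hq : ‖q‖ < 1) {k : ℕ} (hk : 1 ≤ k) :
    sptkdGenFun q k = Pkd q k * tailProd q 0 + (-1) ^ k * qPoch q q (k - 1) := by
  induction k, hk using Nat.le_induction with
  | base => simp [sptkdGenFun_one hq, Pkd, qPoch]; ring
  | succ k hk ih =>
    obtain ⟨j, rfl⟩ : ∃ j, k = j + 1 := ⟨k - 1, by omega⟩
    rw [sptkdGenFun_succ hq hk, ih]
    simp only [Pkd, qPoch, Nat.add_sub_cancel, Finset.prod_range_succ]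
    ring

end Recurrence

section Multisets

open Multiset

variable {k s : ℕ} {S : Finset ℕ}

lemma le_of_mem_replicate_add_val (hS : ∀ x ∈ S, s < x) {x : ℕ}
    (hx : x ∈ replicate k s + S.val) : s ≤ x := by
  rcases mem_add.mp hx with h | h
  · exact (eq_of_mem_replicate h).ge
  · exact (hS x h).le

lemma self_mem_replicate_add_val (hk : 1 ≤ k) : s ∈ replicate k s + S.val :=
  mem_add.mpr (Or.inl (mem_replicate.mpr ⟨by omega, rfl⟩))

lemma sptkd_conditions_replicate_add_val (hk : 1 ≤ k) (hs : 0 < s) (hS : ∀ x ∈ S, s < x) :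
    (∀ x ∈ replicate k s + S.val, 0 < x) ∧
      (replicate k s + S.val).sum = k * s + ∑ x ∈ S, x ∧
      ∃ t, t ∈ replicate k s + S.val ∧ (∀ x ∈ replicate k s + S.val, t ≤ x) ∧
        (replicate k s + S.val).count t = k ∧
        ∀ x ∈ replicate k s + S.val, x ≠ t → (replicate k s + S.val).count x = 1 := by
  have hsS : s ∉ S := fun h => (hS s h).false
  refine ⟨fun x hx => hs.trans_le (le_of_mem_replicate_add_val hS hx), ?_, s,
    self_mem_replicate_add_val hk, fun x => le_of_mem_replicate_add_val hS,
    ?_, fun x hx hxs => ?_⟩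
  · simp [Finset.sum_val]
  · rw [count_add, count_replicate_self, count_eq_zero.mpr hsS, add_zero]
  · have hxS : x ∈ S := (mem_add.mp hx).resolve_left fun h => hxs (eq_of_mem_replicate h)
    rw [count_add, count_replicate, if_neg (Ne.symm hxs), count_eq_one_of_mem S.nodup hxS]

lemma exists_eq_replicate_add_val {m : Multiset ℕ} (hmin : ∀ x ∈ m, s ≤ x)
    (hcount : m.count s = k) (hdistinct : ∀ x ∈ m, x ≠ s → m.count x = 1) :
    ∃ S : Finset ℕ, (∀ x ∈ S, s < x) ∧ m = replicate k s + S.val := by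
  have hnodup : (m.filter (· ≠ s)).Nodup := by
    refine nodup_iff_count_le_one.mpr fun x => ?_
    rw [count_filter]
    split_ifs with hxs
    · by_cases hxm : x ∈ m
      · exact (hdistinct x hxm hxs).le
      · simp [count_eq_zero.mpr hxm]
    · exact zero_le_one
  refine ⟨⟨_, hnodup⟩, fun x hx => ?_, ?_⟩
  · obtain ⟨hxm, hxs⟩ := mem_filter.mp hx
    exact lt_of_le_of_ne (hmin x hxm) (Ne.symm hxs)
  · rw [← hcount, ← filter_eq', filter_add_not]

lemma eq_of_replicate_add_val_eq (hk : 1 ≤ k) {s' : ℕ} {S' : Finset ℕ} (hS : ∀ x ∈ S, s < x)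
    (hS' : ∀ x ∈ S', s' < x) (h : replicate k s + S.val = replicate k s' + S'.val) :
    s = s' ∧ S = S' := by
  obtain rfl : s = s' := le_antisymm
    (le_of_mem_replicate_add_val hS (h.symm ▸ self_mem_replicate_add_val hk))
    (le_of_mem_replicate_add_val hS' (h ▸ self_mem_replicate_add_val hk))
  exact ⟨rfl, Finset.val_injective (add_left_cancel h)⟩

end Multisets

/- The pair `(s, S)` stands for the partition with `k` copies of the smallest part `s + 1` and
the distinct larger parts `S`; `pairWeight k (s, S)` is its size. -/
def tailPairs : Set (ℕ × Finset ℕ) := {p | ∀ i ∈ p.2, p.1 + 1 < i}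

def pairWeight (k : ℕ) (p : ℕ × Finset ℕ) : ℕ := k * (p.1 + 1) + ∑ i ∈ p.2, i

lemma sptkd_eq_card_tailPairs {k : ℕ} (hk : 1 ≤ k) (n : ℕ) :
    sptkd k n = Nat.card {p : tailPairs // pairWeight k p = n} := by
  rw [sptkd]
  refine (Nat.card_eq_of_bijective
    (fun p => ⟨Multiset.replicate k (p.1.1.1 + 1) + p.1.1.2.val, by
      obtain ⟨hpos, hsum, hsmall⟩ := sptkd_conditions_replicate_add_val hk (Nat.succ_pos _) p.1.2
      exact ⟨hpos, hsum.trans p.2, hsmall⟩⟩) ⟨?_, ?_⟩).symm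
  · rintro ⟨⟨⟨s, S⟩, hS⟩, _⟩ ⟨⟨⟨s', S'⟩, hS'⟩, _⟩ heq
    obtain ⟨hs, rfl⟩ := eq_of_replicate_add_val_eq hk hS hS' (Subtype.ext_iff.mp heq)
    obtain rfl : s = s' := by omega
    rfl
  · rintro ⟨m, hpos, hsum, s, hsm, hmin, hcount, hdistinct⟩
    obtain ⟨S, hS, rfl⟩ := exists_eq_replicate_add_val hmin hcount hdistinct
    obtain ⟨t, rfl⟩ : ∃ t, s = t + 1 := Nat.exists_eq_add_one.mpr (hpos s hsm)
    refine ⟨⟨⟨(t, S), hS⟩, ?_⟩, rfl⟩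
    rw [← hsum, (sptkd_conditions_replicate_add_val hk (Nat.succ_pos t) hS).2.1]
    rfl

lemma hasSum_pow_pairWeight {q : ℂ} (hq : ‖q‖ < 1) {k : ℕ} (hk : 1 ≤ k) :
    HasSum (fun p : tailPairs => q ^ pairWeight k p) (sptkdGenFun q k) := by
  set g : ℕ × Finset ℕ → ℂ := fun p => q ^ (k * (p.1 + 1)) * ∏ i ∈ p.2, tailTerm q (p.1 + 1) i
  have hgeom := summable_geometric_of_lt_one (norm_nonneg q) hq
  have hg : Summable g := by
    refine Summable.of_norm_bounded (hgeom.mul_of_nonneg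
      (summable_finsetProd_of_summable_nonneg (fun _ => by positivity) hgeom)
      (fun _ => by positivity) (fun _ => by positivity)) fun p => ?_
    rw [norm_mul, norm_pow]
    exact mul_le_mul (pow_le_pow_of_le_one (norm_nonneg q) hq.le (by nlinarith))
      ((Finset.norm_prod_le _ _).trans
        (Finset.prod_le_prod (fun _ _ => norm_nonneg _) fun i _ => norm_tailTerm_le q _ i))
      (norm_nonneg _) (by positivity)
  have hgF : HasSum g (sptkdGenFun q k) := by
    rw [sptkdGenFun, (hg.hasSum.prod_fiberwise fun s =>
      (hasSum_prod_tailTerm hq (s + 1)).mul_left (q ^ (k * (s + 1)))).tsum_eq]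
    exact hg.hasSum
  have hsupp : Function.support g ⊆ tailPairs := Function.support_subset_iff'.mpr fun p hp => by
    have hp : ¬∀ i ∈ p.2, p.1 + 1 < i := hp
    simp only [g, prod_tailTerm, if_neg hp, mul_zero]
  refine ((hasSum_subtype_iff_of_support_subset hsupp).mpr hgF).congr_fun fun p => ?_
  have hp : ∀ i ∈ p.1.2, p.1.1 + 1 < i := p.2
  simp only [g, Function.comp_apply, prod_tailTerm, if_pos hp, pairWeight, pow_add]

/-- Andrews–Bachraoui Theorem 1: generating function for `sptkd k`. -/
theorem sptkd_genFn (k : ℕ) (hk : 1 ≤ k) (q : ℂ) (hq : ‖q‖ < 1) :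
    ∑' n : ℕ, (sptkd k (n + 1) : ℂ) * q ^ (n + 1) =
      Pkd q k * qPochInf (-q) q + (-1) ^ k * qPoch q q (k - 1) := by
  have h := hasSum_card_fiber_mul_pow _ (hasSum_pow_pairWeight hq hk)
  simp only [← sptkd_eq_card_tailPairs hk] at h
  have hzero : sptkd k 0 = 0 := by
    rw [sptkd_eq_card_tailPairs hk, Nat.card_eq_zero]
    exact Or.inl ⟨fun ⟨p, hp⟩ => by simp [pairWeight] at hp; omega⟩
  rw [← tailProd_zero hq, ← sptkdGenFun_eq hq hk]
  simpa [hzero] using ((hasSum_nat_add_iff' 1).mpr h).tsum_eq
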